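/- arXiv:2007.04965 — 3 statements merged into one kernel-verified Lean document; each statement's English description precedes it below -/
import Mathlib

section
/- Let n ≤ k ≤ n(n−1)/2, c > 2, and define a_{n,k,ℓ} = C(n−2,ℓ−1)·(2k/(n(n−1)))^ℓ and b(k,x) = (∑_{ℓ=1}^x a_{n,k,ℓ})/(∑_{ℓ=1}^n a_{n,k,ℓ}). Then for every integer x > 2eck/n, b(k,x) > 1 − c^(−x+1). -/
theorem truncation_lower_bound (n k x : ℕ) (c : ℝ) (hc : 2 < c)
    (hnk : n ≤ k) (hk : (k : ℝ) ≤ n * (n - 1) / 2)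
    (hx1 : 1 ≤ x) (hxn : x ≤ n)
    (hx : (x : ℝ) > 2 * Real.exp 1 * c * k / n) :
    (∑ l ∈ Finset.Icc 1 x,
        ((n - 2).choose (l - 1) : ℝ) * (2 * k / ((n : ℝ) * (n - 1))) ^ l) /
      (∑ l ∈ Finset.Icc 1 n,
        ((n - 2).choose (l - 1) : ℝ) * (2 * k / ((n : ℝ) * (n - 1))) ^ l)
      > 1 - c ^ (-(x : ℝ) + 1) := by
  have hn3 : 3 ≤ n := by
    rcases Nat.lt_or_ge n 3 with h | h
    · interval_cases n
      · omega
      · have hk1 : (1:ℝ) ≤ (k:ℝ) := by exact_mod_cast hnk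
        norm_num at hk; linarith
      · have hk2 : (2:ℝ) ≤ (k:ℝ) := by exact_mod_cast hnk
        norm_num at hk; linarith
    · exact h
  have hnR : (3 : ℝ) ≤ n := by exact_mod_cast hn3
  have hkR : (1 : ℝ) ≤ k := by exact_mod_cast le_trans (by omega : 1 ≤ n) hnk
  have hxR : (1 : ℝ) ≤ x := by exact_mod_cast hx1
  set p : ℝ := 2 * k / ((n : ℝ) * (n - 1)) with hp
  clear_value p
  have hp0 : 0 < p := by rw [hp]; exact div_pos (by linarith) (by nlinarith)
  set lam : ℝ := 2 * k / n with hlam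
  clear_value lam
  have hlam0 : 0 < lam := by rw [hlam]; exact div_pos (by linarith) (by linarith)
  have hlamp : ((n : ℝ) - 1) * p = lam := by
    rw [hp, hlam, mul_div_assoc', div_eq_div_iff (by nlinarith : (0:ℝ) < (n:ℝ)*((n:ℝ)-1)).ne' (by linarith : (0:ℝ) < (n:ℝ)).ne']
    ring
  set q : ℝ := Real.exp 1 * lam / x with hq
  clear_value q
  have hq0 : 0 < q := by
    rw [hq]; exact div_pos (mul_pos (Real.exp_pos 1) hlam0) (by linarith)
  have hxlam : (x : ℝ) > Real.exp 1 * c * lam := by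
    rw [hlam]
    calc Real.exp 1 * c * (2 * k / n) = 2 * Real.exp 1 * c * k / n := by ring
    _ < x := hx
  have hqc : q < 1 / c := by
    rw [hq, div_lt_div_iff₀ (by linarith) (by linarith)]
    nlinarith [Real.exp_pos 1, hlam0]
  have hq1 : q < 1 := lt_trans hqc (by rw [div_lt_one (by linarith)]; linarith)
  -- key per-exponent bound
  have key : ∀ m : ℕ, x ≤ m → ((n - 2).choose m : ℝ) * p ^ m ≤ q ^ m := by
    intro m hm
    have hm0 : 0 < m := lt_of_lt_of_le hx1 hm
    have hmf : (0:ℝ) < m.factorial := by exact_mod_cast m.factorial_pos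
    have hn2 : ((n - 2 : ℕ) : ℝ) ≤ (n : ℝ) - 1 := by
      have h2n : (2:ℕ) ≤ n := by omega
      have : ((n - 2 : ℕ) : ℝ) = (n : ℝ) - 2 := by push_cast [h2n]; ring
      linarith
    have h1 : ((n - 2).choose m : ℝ) ≤ ((n : ℝ) - 1) ^ m / m.factorial := by
      calc ((n - 2).choose m : ℝ) ≤ ((n - 2 : ℕ) : ℝ) ^ m / m.factorial := by
            exact_mod_cast Nat.choose_le_pow_div m (n - 2)
        _ ≤ ((n : ℝ) - 1) ^ m / m.factorial := by
            gcongr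
    have h2 : ((n - 2).choose m : ℝ) * p ^ m ≤ lam ^ m / m.factorial := by
      calc ((n - 2).choose m : ℝ) * p ^ m ≤ (((n : ℝ) - 1) ^ m / m.factorial) * p ^ m :=
            mul_le_mul_of_nonneg_right h1 (by positivity)
        _ = (((n : ℝ) - 1) * p) ^ m / m.factorial := by rw [mul_pow]; ring
        _ = lam ^ m / m.factorial := by rw [hlamp]
    refine h2.trans ?_
    have hmm : ((m:ℝ)) ^ m ≤ Real.exp 1 ^ m * m.factorial := by
      have h := Real.pow_div_factorial_le_exp (x := (m:ℝ)) (by positivity) m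
      rw [div_le_iff₀ hmf] at h
      calc ((m:ℝ)) ^ m ≤ Real.exp m * m.factorial := h
        _ = Real.exp 1 ^ m * m.factorial := by rw [← Real.exp_one_pow]
    have hxm : ((x:ℝ)) ^ m ≤ Real.exp 1 ^ m * m.factorial := by
      refine le_trans (pow_le_pow_left₀ (by positivity) ?_ m) hmm
      exact_mod_cast hm
    have hx0 : (0:ℝ) < (x:ℝ) ^ m := by positivity
    have hqm : q ^ m = (Real.exp 1 * lam) ^ m / (x:ℝ) ^ m := by rw [hq, div_pow]
    rw [hqm, div_le_div_iff₀ hmf hx0, mul_pow]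
    calc lam ^ m * (x:ℝ) ^ m ≤ lam ^ m * (Real.exp 1 ^ m * m.factorial) :=
          mul_le_mul_of_nonneg_left hxm (by positivity)
      _ = Real.exp 1 ^ m * lam ^ m * m.factorial := by ring
  -- notation for sums
  set f : ℕ → ℝ := fun l => ((n - 2).choose (l - 1) : ℝ) * p ^ l with hf
  have hf0 : ∀ l, 0 ≤ f l := fun l => by rw [hf]; positivity
  have hsplit : (∑ l ∈ Finset.Icc 1 x, f l) + (∑ l ∈ Finset.Ioc x n, f l)
      = ∑ l ∈ Finset.Icc 1 n, f l := by
    rw [show Finset.Icc 1 x = Finset.Ioc 0 x from (Finset.Icc_add_one_left_eq_Ioc 0 x),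
      show Finset.Icc 1 n = Finset.Ioc 0 n from (Finset.Icc_add_one_left_eq_Ioc 0 n)]
    exact Finset.sum_Ioc_consecutive f (Nat.zero_le x) hxn
  have hSx0 : 0 ≤ ∑ l ∈ Finset.Icc 1 x, f l := Finset.sum_nonneg fun l _ => hf0 l
  have hSp : p ≤ ∑ l ∈ Finset.Icc 1 n, f l := by
    have h1 : f 1 = p := by rw [hf]; simp
    rw [← h1]
    exact Finset.single_le_sum (fun l _ => hf0 l) (by simp; omega)
  have hS0 : 0 < ∑ l ∈ Finset.Icc 1 n, f l := lt_of_lt_of_le hp0 hSp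
  -- tail bound
  have htail1 : (∑ l ∈ Finset.Ioc x n, f l) ≤ p * ∑ m ∈ Finset.Ico x n, q ^ m := by
    rw [Finset.mul_sum]
    rw [show Finset.Ioc x n = Finset.image (· + 1) (Finset.Ico x n) by
      ext l; simp [Finset.mem_Ioc, Finset.mem_Ico]]
    rw [Finset.sum_image (by intros a _ b _ h; simp only at h; omega)]
    apply Finset.sum_le_sum
    intro m hm
    simp only [Finset.mem_Ico] at hm
    have hfm : f (m + 1) = ((n - 2).choose m : ℝ) * p ^ m * p := by
      rw [hf]; simp [pow_succ]; ring
    rw [hfm]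
    calc ((n - 2).choose m : ℝ) * p ^ m * p ≤ q ^ m * p :=
          mul_le_mul_of_nonneg_right (key m hm.1) hp0.le
      _ = p * q ^ m := by ring
  have h1q : (0:ℝ) < 1 - q := by linarith
  have hgeom : (∑ m ∈ Finset.Ico x n, q ^ m) ≤ q ^ x / (1 - q) := by
    rw [Finset.sum_Ico_eq_sum_range]
    have hpa : ∀ i, q ^ (x + i) = q ^ x * q ^ i := fun i => pow_add q x i
    simp_rw [hpa, ← Finset.mul_sum]
    rw [div_eq_mul_inv]
    apply mul_le_mul_of_nonneg_left ?_ (by positivity)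
    rw [geom_sum_eq hq1.ne]
    have hconv : (q ^ (n - x) - 1) / (q - 1) = (1 - q ^ (n - x)) / (1 - q) := by
      rw [div_eq_div_iff (by linarith) (by linarith)]; ring
    rw [hconv, inv_eq_one_div, div_le_div_iff₀ h1q h1q]
    nlinarith [pow_nonneg hq0.le (n - x)]
  -- bound q^x/(1-q) < c/(c^x)
  have hc0 : (0:ℝ) < c := by linarith
  have hrpow : c ^ (-(x : ℝ) + 1) = c / c ^ x := by
    rw [show (-(x:ℝ) + 1) = 1 - (x:ℝ) by ring, Real.rpow_sub hc0, Real.rpow_one,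
      Real.rpow_natCast]
  have hcx0 : (0:ℝ) < c ^ x := by positivity
  have hqxc : q ^ x < 1 / c ^ x := by
    have h := pow_lt_pow_left₀ hqc hq0.le (by omega : x ≠ 0)
    rwa [div_pow, one_pow] at h
  have hbound : q ^ x / (1 - q) < c / c ^ x := by
    have hden : (0:ℝ) < 1 - 1/c := by
      rw [sub_pos, div_lt_one hc0]; linarith
    have h1c : 1 - 1/c ≤ 1 - q := by linarith [hqc]
    have hA : q ^ x / (1 - q) < (1 / c ^ x) / (1 - 1/c) :=
      div_lt_div₀ hqxc h1c (by positivity) hden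
    refine hA.trans_le ?_
    have hE : (1 / c ^ x) / (1 - 1/c) = c / (c ^ x * (c - 1)) := by
      rw [div_eq_div_iff hden.ne' (mul_pos hcx0 (by linarith : (0:ℝ) < c - 1)).ne']
      field_simp
    rw [hE]
    gcongr
    exact le_mul_of_one_le_right hcx0.le (by linarith)
  -- assemble
  have hT : (∑ l ∈ Finset.Ioc x n, f l) < c ^ (-(x : ℝ) + 1) * ∑ l ∈ Finset.Icc 1 n, f l := by
    calc (∑ l ∈ Finset.Ioc x n, f l) ≤ p * (q ^ x / (1 - q)) :=
          htail1.trans (mul_le_mul_of_nonneg_left hgeom hp0.le)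
      _ < p * (c / c ^ x) := mul_lt_mul_of_pos_left hbound hp0
      _ = (c / c ^ x) * p := by ring
      _ ≤ (c / c ^ x) * ∑ l ∈ Finset.Icc 1 n, f l :=
          mul_le_mul_of_nonneg_left hSp (by positivity)
      _ = c ^ (-(x : ℝ) + 1) * ∑ l ∈ Finset.Icc 1 n, f l := by rw [hrpow]
  rw [gt_iff_lt, lt_div_iff₀ hS0]
  have hring : (1 - c ^ (-(x:ℝ)+1)) * (∑ l ∈ Finset.Icc 1 n, f l)
      = (∑ l ∈ Finset.Icc 1 n, f l) - c ^ (-(x:ℝ)+1) * (∑ l ∈ Finset.Icc 1 n, f l) := by ring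
  rw [hring]
  linarith [hT, hsplit]
end

section
/- Let 10 ≤ n ≤ k ≤ n(n−1)/2, c > 3, and define a_{n,k,ℓ} = C(n−2,ℓ−1)·(2k/(n(n−1)))^ℓ and b(k,x) = (∑_{ℓ=1}^x a_{n,k,ℓ})/(∑_{ℓ=1}^n a_{n,k,ℓ}). Then for every integer x with 1 ≤ x < k/(2ecn), b(k,x) < 2^(−k/(2n)). -/
set_option maxHeartbeats 1600000 in
theorem truncation_upper_bound (n k x : ℕ) (c : ℝ) (hc : 3 < c)
    (hn : 10 ≤ n) (hnk : n ≤ k) (hk : (k : ℝ) ≤ n * (n - 1) / 2)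
    (hx1 : 1 ≤ x) (hx : (x : ℝ) < k / (2 * Real.exp 1 * c * n)) :
    (∑ l ∈ Finset.Icc 1 x,
        ((n - 2).choose (l - 1) : ℝ) * (2 * k / ((n : ℝ) * (n - 1))) ^ l) /
      (∑ l ∈ Finset.Icc 1 n,
        ((n - 2).choose (l - 1) : ℝ) * (2 * k / ((n : ℝ) * (n - 1))) ^ l)
      < (2 : ℝ) ^ (-(k : ℝ) / (2 * n)) := by
  have hnR : (10:ℝ) ≤ n := by exact_mod_cast hn
  have hn0 : (0:ℝ) < n := by linarith
  have hkpos : 0 < k := by omega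
  have hkR : (0:ℝ) < k := by exact_mod_cast hkpos
  have hE : (0:ℝ) < Real.exp 1 := Real.exp_pos 1
  have hEl : (2.7182818283:ℝ) < Real.exp 1 := Real.exp_one_gt_d9
  have hEu : Real.exp 1 < 2.7182818286 := Real.exp_one_lt_d9
  have hc0 : (0:ℝ) < c := by linarith
  have hxnn : (0:ℝ) ≤ x := Nat.cast_nonneg x
  have hxR1 : (1:ℝ) ≤ x := by exact_mod_cast hx1
  have h2kR : 2 * (k:ℝ) ≤ (n:ℝ) * ((n:ℝ) - 1) := by linarith
  -- x bounds
  have hcx : (x:ℝ) * (2 * Real.exp 1 * c * n) < k := by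
    rw [lt_div_iff₀ (by positivity)] at hx
    exact hx
  have hxE : (x:ℝ) * (6 * Real.exp 1 * n) < k := by
    nlinarith [mul_nonneg (mul_nonneg (mul_nonneg (by positivity : (0:ℝ) ≤ 2 * Real.exp 1)
      (by linarith : (0:ℝ) ≤ c - 3)) hn0.le) hxnn]
  have hK : 6 * Real.exp 1 * (n:ℝ) < k := by
    nlinarith [mul_pos (mul_pos (by positivity : (0:ℝ) < 6 * Real.exp 1) hn0)
      (by linarith : (0:ℝ) < (x:ℝ))]
  -- introduce m with its key properties, then forget its definition
  obtain ⟨m, hmlbR, hmubR⟩ :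
      ∃ m : ℕ, 49 * (k:ℝ) < 100 * ((n:ℝ) * (m:ℝ))
        ∧ 100 * ((n:ℝ) * ((m:ℝ) - 1)) ≤ 49 * (k:ℝ) := by
    refine ⟨49 * k / (100 * n) + 1, ?_, ?_⟩
    · have h1 := Nat.div_add_mod (49 * k) (100 * n)
      have h2 := Nat.mod_lt (49 * k) (show 0 < 100 * n by omega)
      have h1R : 100 * (n:ℝ) * ((49 * k / (100 * n) : ℕ):ℝ) + ((49 * k % (100 * n) : ℕ):ℝ)
          = 49 * (k:ℝ) := by exact_mod_cast h1
      have h2R : ((49 * k % (100 * n) : ℕ):ℝ) < 100 * (n:ℝ) := by exact_mod_cast h2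
      push_cast
      linarith
    · have h1 := Nat.div_mul_le_self (49 * k) (100 * n)
      have h1R : ((49 * k / (100 * n) : ℕ):ℝ) * (100 * (n:ℝ)) ≤ 49 * (k:ℝ) := by
        exact_mod_cast h1
      push_cast
      linarith
  have hmn : m ≤ n - 1 := by
    have hmR : (m:ℝ) ≤ (n:ℝ) - 1 := by nlinarith
    have : (m:ℝ) ≤ ((n - 1 : ℕ) : ℝ) := by
      rw [Nat.cast_sub (by omega : 1 ≤ n)]
      push_cast
      linarith
    exact_mod_cast this
  -- x < m
  have h100 : 100 * ((n:ℝ) * (x:ℝ)) < 49 * (k:ℝ) := by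
    nlinarith [mul_nonneg hn0.le hxnn]
  have hmx : x < m := by
    have hxm : (x:ℝ) < (m:ℝ) := by nlinarith
    exact_mod_cast hxm
  -- p and a
  have hp0 : (0:ℝ) < 2 * (k:ℝ) / ((n:ℝ) * ((n:ℝ) - 1)) :=
    div_pos (by linarith) (mul_pos hn0 (by linarith : (0:ℝ) < (n:ℝ) - 1))
  set p : ℝ := 2 * (k:ℝ) / ((n:ℝ) * ((n:ℝ) - 1)) with hpdef
  set a : ℕ → ℝ := fun l => ((n - 2).choose (l - 1) : ℝ) * p ^ l with hadef
  have hann : ∀ l, 0 ≤ a l := by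
    intro l
    simp only [hadef]
    exact mul_nonneg (Nat.cast_nonneg _) (pow_nonneg hp0.le l)
  have hapos : ∀ l, l ≤ n - 1 → 0 < a l := by
    intro l hl
    simp only [hadef]
    exact mul_pos (by exact_mod_cast Nat.choose_pos (by omega : l - 1 ≤ n - 2)) (pow_pos hp0 l)
  -- step lemma
  have hstep : ∀ l, 1 ≤ l → l + 1 ≤ m → (400/147 : ℝ) * a l ≤ a (l + 1) := by
    intro l hl1 hlm
    obtain ⟨j, rfl⟩ : ∃ j, l = j + 1 := ⟨l - 1, by omega⟩
    have hjn : j + 1 ≤ n - 2 := by omega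
    have hlmR : ((j:ℝ) + 1) ≤ (m:ℝ) - 1 := by
      have : ((j + 2 : ℕ):ℝ) ≤ (m:ℝ) := by exact_mod_cast hlm
      push_cast at this
      linarith
    have hlub : 100 * ((n:ℝ) * ((j:ℝ) + 1)) ≤ 49 * (k:ℝ) := by
      nlinarith [mul_le_mul_of_nonneg_left hlmR (by linarith : (0:ℝ) ≤ 100 * (n:ℝ))]
    -- choose identity
    have hsub : ((n - 2 - j : ℕ) : ℝ) = (n:ℝ) - 2 - j := by
      have h1 : (n - 2 - j : ℕ) = n - (2 + j) := by omega
      rw [h1, Nat.cast_sub (by omega : 2 + j ≤ n)]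
      push_cast
      ring
    have hchoose : ((n-2).choose (j+1) : ℝ) * ((j:ℝ) + 1)
        = ((n-2).choose j : ℝ) * ((n:ℝ) - 2 - j) := by
      have h1 := Nat.choose_succ_right_eq (n-2) j
      have h1R : (((n-2).choose (j+1) : ℕ) : ℝ) * ((j + 1 : ℕ) : ℝ)
          = (((n-2).choose j : ℕ) : ℝ) * ((n - 2 - j : ℕ) : ℝ) := by exact_mod_cast h1
      rw [hsub] at h1R
      push_cast at h1R
      push_cast
      linarith [h1R]
    have ht0 : (0:ℝ) < (j:ℝ) + 1 := by positivity
    -- key ratio inequality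
    have hkey : (400/147:ℝ) * ((j:ℝ) + 1) ≤ ((n:ℝ) - 2 - j) * p := by
      rw [hpdef, mul_div_assoc']
      rw [le_div_iff₀ (by nlinarith : (0:ℝ) < (n:ℝ) * ((n:ℝ) - 1))]
      have ht2 : ((j:ℝ) + 1) ≤ 49/200 * ((n:ℝ) - 1) := by nlinarith
      nlinarith [mul_le_mul_of_nonneg_right hlub (by linarith : (0:ℝ) ≤ (n:ℝ) - 1),
        mul_le_mul_of_nonneg_left ht2 hkR.le]
    have hC : ((n-2).choose (j+1) : ℝ) = ((n-2).choose j : ℝ) * ((n:ℝ) - 2 - j) / ((j:ℝ) + 1) := by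
      rw [eq_div_iff (ne_of_gt ht0)]
      linarith [hchoose]
    have hCnn : (0:ℝ) ≤ ((n-2).choose j : ℝ) := Nat.cast_nonneg _
    have hpj : (0:ℝ) < p ^ (j + 1) := pow_pos hp0 _
    show (400/147:ℝ) * a (j + 1) ≤ a (j + 1 + 1)
    simp only [hadef, Nat.add_sub_cancel]
    rw [hC]
    have hmain : (400/147:ℝ) * p ^ (j+1) ≤ ((n:ℝ) - 2 - j) / ((j:ℝ) + 1) * (p ^ (j+1) * p) := by
      rw [show ((n:ℝ) - 2 - (j:ℝ)) / ((j:ℝ) + 1) * (p ^ (j+1) * p)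
        = ((n:ℝ) - 2 - (j:ℝ)) * (p ^ (j+1) * p) / ((j:ℝ) + 1) by ring, le_div_iff₀ ht0]
      calc (400/147:ℝ) * p ^ (j+1) * ((j:ℝ) + 1) = p ^ (j+1) * ((400/147) * ((j:ℝ)+1)) := by ring
        _ ≤ p ^ (j+1) * (((n:ℝ) - 2 - j) * p) := mul_le_mul_of_nonneg_left hkey hpj.le
        _ = ((n:ℝ) - 2 - j) * (p ^ (j+1) * p) := by ring
    calc (400/147:ℝ) * (((n-2).choose j : ℝ) * p ^ (j+1))
        = ((n-2).choose j : ℝ) * ((400/147:ℝ) * p ^ (j+1)) := by ring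
      _ ≤ ((n-2).choose j : ℝ) * (((n:ℝ) - 2 - j) / ((j:ℝ) + 1) * (p ^ (j+1) * p)) :=
          mul_le_mul_of_nonneg_left hmain hCnn
      _ = ((n-2).choose j : ℝ) * ((n:ℝ) - 2 - j) / ((j:ℝ) + 1) * p ^ (j+1+1) := by
          rw [pow_succ]
          ring
  -- growth lemma
  have hgrow : ∀ jj : ℕ, x + jj ≤ m → (400/147:ℝ) ^ jj * a x ≤ a (x + jj) := by
    intro jj
    induction jj with
    | zero => intro _; simp
    | succ i ih =>
      intro hxi
      have h1 := ih (by omega)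
      have h2 := hstep (x + i) (by omega) (by omega)
      calc (400/147:ℝ) ^ (i+1) * a x = (400/147) * ((400/147:ℝ) ^ i * a x) := by ring
        _ ≤ (400/147) * a (x + i) := mul_le_mul_of_nonneg_left h1 (by norm_num)
        _ ≤ a (x + i + 1) := h2
  -- sum bound
  have hsum : ∀ t, 1 ≤ t → t ≤ m → (∑ l ∈ Finset.Icc 1 t, a l) ≤ 2 * a t := by
    intro t
    induction t with
    | zero => omega
    | succ s ih =>
      intro _ hsm
      rcases Nat.eq_zero_or_pos s with hs | hs
      · subst hs
        simp [Finset.Icc_self]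
        linarith [hann 1]
      · have h1 := ih hs (by omega)
        have h2 := hstep s hs hsm
        rw [Finset.sum_Icc_succ_top (by omega : 1 ≤ s + 1)]
        linarith [hann s]
  -- numeric core
  have hnumcore : (0.6931471808:ℝ) * (1 + (k:ℝ) / (2 * (n:ℝ))) < (m:ℝ) - (x:ℝ) := by
    have hB' : (16.3096909698:ℝ) * ((x:ℝ) * (n:ℝ)) < k := by
      nlinarith [mul_nonneg hxnn hn0.le]
    have hC' : (16.3096909698:ℝ) * (n:ℝ) < k := by nlinarith
    have hmain : (0.6931471808:ℝ) * (2 * (n:ℝ) + (k:ℝ))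
        < 2 * ((n:ℝ) * (m:ℝ)) - 2 * ((x:ℝ) * (n:ℝ)) := by
      linarith
    rw [show (1:ℝ) + (k:ℝ) / (2 * (n:ℝ)) = (2 * (n:ℝ) + (k:ℝ)) / (2 * (n:ℝ)) by field_simp]
    rw [mul_div_assoc']
    rw [div_lt_iff₀ (by linarith : (0:ℝ) < 2 * (n:ℝ))]
    nlinarith
  -- key power inequality
  have hrlog : 1 < Real.log (400/147) := by
    rw [show (1:ℝ) = Real.log (Real.exp 1) from (Real.log_exp 1).symm]
    apply Real.log_lt_log (Real.exp_pos 1)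
    nlinarith
  have hmxcast : ((m - x : ℕ) : ℝ) = (m:ℝ) - (x:ℝ) := by
    rw [Nat.cast_sub hmx.le]
  have hkpow : 2 * (2:ℝ) ^ ((k:ℝ) / (2 * (n:ℝ))) < (400/147:ℝ) ^ (m - x) := by
    have hL : (0:ℝ) < 2 * (2:ℝ) ^ ((k:ℝ) / (2 * (n:ℝ))) := by positivity
    have hR : (0:ℝ) < (400/147:ℝ) ^ (m - x) := by positivity
    rw [← Real.exp_log hL, ← Real.exp_log hR, Real.exp_lt_exp]
    rw [Real.log_mul (by norm_num) (by positivity), Real.log_rpow (by norm_num : (0:ℝ) < 2),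
      Real.log_pow, hmxcast]
    have hlog2 : Real.log 2 < 0.6931471808 := Real.log_two_lt_d9
    have hlog2p : (0:ℝ) < Real.log 2 := Real.log_pos (by norm_num)
    have hKnn : (0:ℝ) ≤ (k:ℝ) / (2 * (n:ℝ)) := by positivity
    have hmxpos : (0:ℝ) ≤ (m:ℝ) - (x:ℝ) := by
      have : (x:ℝ) < (m:ℝ) := by exact_mod_cast hmx
      linarith
    nlinarith [mul_nonneg (sub_nonneg.mpr hlog2.le)
        (by linarith : (0:ℝ) ≤ 1 + (k:ℝ) / (2 * (n:ℝ))),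
      mul_nonneg (sub_nonneg.mpr hrlog.le) hmxpos]
  -- assemble
  have hax : 0 < a x := hapos x (by omega)
  have ham : 0 < a m := hapos m (by omega)
  have hnum_le : (∑ l ∈ Finset.Icc 1 x, a l) ≤ 2 * a x := hsum x hx1 hmx.le
  have hgm := hgrow (m - x) (by omega)
  rw [show x + (m - x) = m by omega] at hgm
  have hden : a m ≤ ∑ l ∈ Finset.Icc 1 n, a l := by
    apply Finset.single_le_sum (fun i _ => hann i)
    simp only [Finset.mem_Icc]
    omega
  have hden0 : (0:ℝ) < ∑ l ∈ Finset.Icc 1 n, a l := lt_of_lt_of_le ham hden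
  show (∑ l ∈ Finset.Icc 1 x, a l) / (∑ l ∈ Finset.Icc 1 n, a l)
      < (2:ℝ) ^ (-(k:ℝ) / (2 * (n:ℝ)))
  have step1 : (∑ l ∈ Finset.Icc 1 x, a l) / (∑ l ∈ Finset.Icc 1 n, a l) ≤ 2 * a x / a m :=
    div_le_div₀ (by linarith) hnum_le ham hden
  have hinv : (2:ℝ) ^ (-(k:ℝ) / (2 * (n:ℝ))) * (2:ℝ) ^ ((k:ℝ) / (2 * (n:ℝ))) = 1 := by
    rw [← Real.rpow_add (by norm_num : (0:ℝ) < 2),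
      show (-(k:ℝ) / (2 * (n:ℝ)) + (k:ℝ) / (2 * (n:ℝ))) = 0 by ring, Real.rpow_zero]
  have hrpos : (0:ℝ) < (2:ℝ) ^ (-(k:ℝ) / (2 * (n:ℝ))) :=
    Real.rpow_pos_of_pos (by norm_num) _
  have step2 : 2 * a x / a m < (2:ℝ) ^ (-(k:ℝ) / (2 * (n:ℝ))) := by
    rw [div_lt_iff₀ ham]
    have h1 : (2:ℝ) ^ (-(k:ℝ) / (2 * (n:ℝ))) * ((400/147:ℝ) ^ (m - x) * a x)
        ≤ (2:ℝ) ^ (-(k:ℝ) / (2 * (n:ℝ))) * a m := mul_le_mul_of_nonneg_left hgm hrpos.le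
    have h3 : 2 * (2:ℝ) ^ ((k:ℝ) / (2 * (n:ℝ))) * a x < (400/147:ℝ) ^ (m - x) * a x :=
      mul_lt_mul_of_pos_right hkpow hax
    have h2 : 2 * a x < (2:ℝ) ^ (-(k:ℝ) / (2 * (n:ℝ))) * ((400/147:ℝ) ^ (m - x) * a x) := by
      calc 2 * a x
          = (2:ℝ) ^ (-(k:ℝ) / (2 * (n:ℝ))) * (2 * (2:ℝ) ^ ((k:ℝ) / (2 * (n:ℝ))) * a x) := by
            rw [show (2:ℝ) ^ (-(k:ℝ) / (2 * (n:ℝ))) * (2 * (2:ℝ) ^ ((k:ℝ) / (2 * (n:ℝ))) * a x)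
              = ((2:ℝ) ^ (-(k:ℝ) / (2 * (n:ℝ))) * (2:ℝ) ^ ((k:ℝ) / (2 * (n:ℝ)))) * (2 * a x)
              by ring, hinv, one_mul]
        _ < (2:ℝ) ^ (-(k:ℝ) / (2 * (n:ℝ))) * ((400/147:ℝ) ^ (m - x) * a x) :=
            mul_lt_mul_of_pos_left h3 hrpos
    linarith
  linarith
end

section
/- For all real x with 1 ≤ ℓ ≤ x and parameters satisfying x < k/(2ecn), n ≥ 3, k ≥ n, c > 3: (2ek(n−2)/((ℓ−1)·n·(n−1)))^(ℓ−1) < (4e²c(n−2)/(n−1))^(k/(2ecn)), for integer ℓ with 2 ≤ ℓ ≤ x. -/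
open Real Set

lemma phi_strictMono (A : ℝ) (hA : 0 < A) :
    StrictMonoOn (fun s : ℝ => s * (Real.log A - Real.log s))
      (Set.Ioc 0 (A / Real.exp 1)) := by
  have hsub : Set.Ioc (0:ℝ) (A / Real.exp 1) ⊆ {(0:ℝ)}ᶜ := by
    intro s hs; exact (ne_of_gt hs.1)
  apply strictMonoOn_of_deriv_pos (convex_Ioc _ _)
  · exact (continuousOn_id.mul ((continuousOn_const.sub
      (Real.continuousOn_log.mono hsub))))
  · intro s hs
    rw [interior_Ioc] at hs
    have hs0 : 0 < s := hs.1
    have hd : HasDerivAt (fun s : ℝ => s * (Real.log A - Real.log s))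
        (1 * (Real.log A - Real.log s) + s * (0 - s⁻¹)) s := by
      exact (hasDerivAt_id s).mul ((hasDerivAt_const s (Real.log A)).sub
        (Real.hasDerivAt_log (ne_of_gt hs0)))
    rw [hd.deriv]
    have hlog : Real.log s < Real.log A - 1 := by
      have := Real.log_lt_log hs0 hs.2
      rwa [Real.log_div (ne_of_gt hA) (Real.exp_ne_zero 1), Real.log_exp] at this
    have hsne : s ≠ 0 := ne_of_gt hs0
    field_simp
    linarith

theorem key_claim (n k l x : ℕ) (c : ℝ) (hc : 3 < c)
    (hn : 3 ≤ n) (hnk : n ≤ k) (hk : (k : ℝ) ≤ n * (n - 1) / 2)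
    (hl : 2 ≤ l) (hlx : l ≤ x) (hx : (x : ℝ) < k / (2 * Real.exp 1 * c * n)) :
    (2 * Real.exp 1 * k * ((n : ℝ) - 2) / (((l : ℝ) - 1) * n * (n - 1))) ^ (l - 1)
      < (4 * Real.exp 1 ^ 2 * c * ((n : ℝ) - 2) / ((n : ℝ) - 1))
          ^ ((k : ℝ) / (2 * Real.exp 1 * c * n)) := by
  set E := Real.exp 1 with hE
  have hE1 : (1:ℝ) < E := by have := Real.add_one_lt_exp (one_ne_zero); rw [hE]; linarith
  have hEpos : (0:ℝ) < E := by linarith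
  have hn3 : (3:ℝ) ≤ (n:ℝ) := by exact_mod_cast hn
  have hk3 : (3:ℝ) ≤ (k:ℝ) := le_trans hn3 (by exact_mod_cast hnk)
  have hkpos : (0:ℝ) < k := by linarith
  have hnpos : (0:ℝ) < n := by linarith
  have hn1 : (0:ℝ) < (n:ℝ) - 1 := by linarith
  have hn2 : (0:ℝ) < (n:ℝ) - 2 := by linarith
  have hcpos : (0:ℝ) < c := by linarith
  set A : ℝ := 2 * E * k * ((n:ℝ) - 2) / ((n:ℝ) * ((n:ℝ) - 1)) with hAdef
  set T : ℝ := (k:ℝ) / (2 * E * c * n) with hTdef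
  set t : ℝ := (l:ℝ) - 1 with htdef
  have hApos : 0 < A := by positivity
  have hTpos : 0 < T := by positivity
  have hl2 : (2:ℝ) ≤ (l:ℝ) := by exact_mod_cast hl
  have htpos : 0 < t := by simp only [htdef]; linarith
  have hlx' : (l:ℝ) ≤ (x:ℝ) := by exact_mod_cast hlx
  have htT : t < T := by simp only [htdef, hTdef]; rw [hTdef] at hx; linarith
  have hTA : T ≤ A / E := by
    rw [le_div_iff₀ hEpos, hTdef, hAdef, div_mul_eq_mul_div,
      div_le_div_iff₀ (by positivity) (by positivity)]
    have h1 : (n:ℝ) - 1 ≤ 12 * ((n:ℝ) - 2) := by linarith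
    have h2 : (12:ℝ) ≤ 4 * E * c := by nlinarith
    nlinarith [mul_pos (mul_pos hEpos hkpos) hnpos, h1, h2,
      mul_pos hn2 (mul_pos (mul_pos hEpos hkpos) hnpos)]
  have hmono := phi_strictMono A hApos ⟨htpos, le_trans (le_of_lt htT) hTA⟩
    ⟨hTpos, hTA⟩ htT
  -- rewrite LHS
  have hbaseL : 2 * E * (k:ℝ) * ((n : ℝ) - 2) / (((l : ℝ) - 1) * n * (n - 1)) = A / t := by
    rw [hAdef, htdef]
    field_simp
  have hbaseR : 4 * E ^ 2 * c * ((n : ℝ) - 2) / ((n : ℝ) - 1) = A / T := by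
    rw [hAdef, hTdef]
    field_simp
    ring
  rw [hbaseL, hbaseR]
  have h1l : 1 ≤ l := le_trans one_le_two hl
  have hcast : ((l - 1 : ℕ) : ℝ) = t := by
    rw [htdef, Nat.cast_sub h1l]; norm_num
  have hLHS : (A / t) ^ (l - 1) = Real.exp (t * (Real.log A - Real.log t)) := by
    rw [← Real.rpow_natCast (A / t) (l - 1), hcast,
      Real.rpow_def_of_pos (by positivity), Real.log_div (ne_of_gt hApos) (ne_of_gt htpos)]
    ring_nf
  have hRHS : (A / T) ^ T = Real.exp (T * (Real.log A - Real.log T)) := by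
    rw [Real.rpow_def_of_pos (by positivity), Real.log_div (ne_of_gt hApos) (ne_of_gt hTpos)]
    ring_nf
  rw [hLHS, hRHS]
  exact Real.exp_lt_exp.mpr hmono
end
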